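/- For every n ∈ S, the set of mode lengths satisfies γ(n + t) = {m + t/n₂ : m ∈ γ(n)}, i.e., adding the trade element t to n translates the set of mode lengths by the integer t/n₂ = (n₃−n₁)/δ. -/

import Mathlib

/-!
Write `n₂ - n₁ = v δ` and `n₃ - n₁ = w δ` with `v, w` coprime, so that `t = w n₂`. The value of a
factorization `a` is `len a * n₁ + δ (a₂ v + a₃ w)`; hence among factorizations of a fixed value
and length, `a₂ v + a₃ w` is fixed, so `a₂` is fixed modulo `w`, and the trade `w n₂ = (w - v) n₁ + v n₃`
lets one reduce `a₂` below `w`. Consequently the factorizations of `n + t` of length `m + w` are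
those of `n` of length `m` shifted by `w` in the second coordinate, plus exactly one with `a₂ < w`
when `n` has a factorization of length `m`, and lengths `< w` occur at most once. So
`f_{n+t}(m + w) = f_n(m) + 1` wherever `f_n(m) > 0`, which shifts the modes by `w`.
-/

/-- The (finite) set of factorizations of `n` in the numerical semigroup `⟨n₁, n₂, n₃⟩`:
triples `(a₁, a₂, a₃) ∈ ℕ³` with `a₁n₁ + a₂n₂ + a₃n₃ = n`.  (Each coordinate is at most `n`
whenever the generators are positive, so the bounding box `[0,n]³` captures all of them.) -/
def Zf (n₁ n₂ n₃ n : ℕ) : Finset (ℕ × ℕ × ℕ) :=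
  (Finset.range (n + 1) ×ˢ Finset.range (n + 1) ×ˢ Finset.range (n + 1)).filter
    (fun a => a.1 * n₁ + a.2.1 * n₂ + a.2.2 * n₃ = n)

/-- The length of a factorization. -/
def len (a : ℕ × ℕ × ℕ) : ℕ := a.1 + a.2.1 + a.2.2

/-- Membership in the numerical semigroup `⟨n₁, n₂, n₃⟩`. -/
def inS (n₁ n₂ n₃ n : ℕ) : Prop := ∃ a₁ a₂ a₃ : ℕ, a₁ * n₁ + a₂ * n₂ + a₃ * n₃ = n

/-- `fmul n₁ n₂ n₃ n ℓ` is the number of factorizations of `n` having length `ℓ`. -/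
def fmul (n₁ n₂ n₃ n ℓ : ℕ) : ℕ := ((Zf n₁ n₂ n₃ n).filter (fun a => len a = ℓ)).card

/-- The mode frequency `ν(n)`: the maximum, over all lengths `ℓ ∈ ℕ`, of the number of
factorizations of `n` of length `ℓ`. -/
noncomputable def modeFreq (n₁ n₂ n₃ n : ℕ) : ℕ := sSup (Set.range (fmul n₁ n₂ n₃ n))

/-- The set `γ(n)` of mode factorization lengths. -/
def modeSet (n₁ n₂ n₃ n : ℕ) : Set ℕ := {ℓ | fmul n₁ n₂ n₃ n ℓ = modeFreq n₁ n₂ n₃ n}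

/-- The mean factorization length `μ(n)`. -/
def meanLen (n₁ n₂ n₃ n : ℕ) : ℚ :=
  (∑ z ∈ Zf n₁ n₂ n₃ n, (len z : ℚ)) / ((Zf n₁ n₂ n₃ n).card : ℚ)

/-- The lengths of all factorizations of `n`, counted with multiplicity, in nondecreasing
order. -/
def sortedLengths (n₁ n₂ n₃ n : ℕ) : List ℕ :=
  Multiset.sort ((Zf n₁ n₂ n₃ n).val.map len) (· ≤ ·)

/-- The median factorization length `η(n)`: with the lengths listed with multiplicity in
nondecreasing order as `ℓ₁ ≤ ⋯ ≤ ℓ_M`, it is `ℓ_{(M+1)/2}` for odd `M` and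
`(ℓ_{M/2} + ℓ_{M/2+1})/2` for even `M`. -/
def medianLen (n₁ n₂ n₃ n : ℕ) : ℚ :=
  let l := sortedLengths n₁ n₂ n₃ n
  if l.length % 2 = 1 then (l.getD (l.length / 2) 0 : ℚ)
  else ((l.getD (l.length / 2 - 1) 0 : ℚ) + (l.getD (l.length / 2) 0 : ℚ)) / 2

open Finset

def modes (f : ℕ → ℕ) : Set ℕ := {ℓ | f ℓ = sSup (Set.range f)}

section Modes

variable {f g : ℕ → ℕ} {w : ℕ}

lemma sSup_range_eq_add_one (hf : BddAbove (Set.range f)) (hpos : ∃ m, 0 < f m)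
    (hsmall : ∀ ℓ < w, g ℓ ≤ 1) (hle : ∀ m, g (m + w) ≤ f m + 1)
    (hsucc : ∀ m, 0 < f m → g (m + w) = f m + 1) :
    sSup (Set.range g) = sSup (Set.range f) + 1 := by
  have hfM : ∀ m, f m ≤ sSup (Set.range f) := fun m => le_csSup hf ⟨m, rfl⟩
  have hM : 0 < sSup (Set.range f) := by
    obtain ⟨m, hm⟩ := hpos
    exact hm.trans_le (hfM m)
  have hgM : ∀ ℓ, g ℓ ≤ sSup (Set.range f) + 1 := by
    intro ℓ
    rcases lt_or_ge ℓ w with hℓ | hℓ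
    · exact (hsmall ℓ hℓ).trans (by omega)
    · obtain ⟨m, rfl⟩ := Nat.exists_eq_add_of_le' hℓ
      exact (hle m).trans (by grind)
  obtain ⟨m₀, hm₀⟩ := Nat.sSup_mem (Set.range_nonempty f) hf
  refine le_antisymm (csSup_le (Set.range_nonempty g) (Set.forall_mem_range.2 hgM)) ?_
  rw [← hm₀, ← hsucc m₀ (by omega)]
  exact le_csSup ⟨_, Set.forall_mem_range.2 hgM⟩ ⟨_, rfl⟩

lemma modes_eq_image_add (hf : BddAbove (Set.range f)) (hpos : ∃ m, 0 < f m)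
    (hsmall : ∀ ℓ < w, g ℓ ≤ 1) (hle : ∀ m, g (m + w) ≤ f m + 1)
    (hsucc : ∀ m, 0 < f m → g (m + w) = f m + 1) :
    modes g = (· + w) '' modes f := by
  have hM := sSup_range_eq_add_one hf hpos hsmall hle hsucc
  have hfM : ∀ m, f m ≤ sSup (Set.range f) := fun m => le_csSup hf ⟨m, rfl⟩
  have hM0 : 0 < sSup (Set.range f) := by
    obtain ⟨m, hm⟩ := hpos
    exact hm.trans_le (hfM m)
  ext ℓ
  simp only [modes, Set.mem_ofPred_eq, Set.mem_image, hM]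
  constructor
  · intro hℓ
    have hwℓ : w ≤ ℓ := by
      by_contra! h
      have := hsmall ℓ h
      omega
    obtain ⟨m, rfl⟩ := Nat.exists_eq_add_of_le' hwℓ
    exact ⟨m, le_antisymm (hfM m) (by grind), rfl⟩
  · rintro ⟨m, hm, rfl⟩
    rw [hsucc m (by omega), hm]

end Modes

lemma mem_Zf {n₁ n₂ n₃ N : ℕ} (h₁ : 0 < n₁) (h₂ : 0 < n₂) (h₃ : 0 < n₃) {a : ℕ × ℕ × ℕ} :
    a ∈ Zf n₁ n₂ n₃ N ↔ a.1 * n₁ + a.2.1 * n₂ + a.2.2 * n₃ = N := by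
  obtain ⟨x, y, z⟩ := a
  simp only [Zf, mem_filter, mem_product, mem_range, and_iff_right_iff_imp]
  intro h
  have := Nat.le_mul_of_pos_right x h₁
  have := Nat.le_mul_of_pos_right y h₂
  have := Nat.le_mul_of_pos_right z h₃
  omega

lemma bddAbove_range_fmul (n₁ n₂ n₃ N : ℕ) : BddAbove (Set.range (fmul n₁ n₂ n₃ N)) :=
  ⟨#(Zf n₁ n₂ n₃ N), Set.forall_mem_range.2 fun _ => card_filter_le _ _⟩

lemma exists_fmul_pos {n₁ n₂ n₃ N : ℕ} (h₁ : 0 < n₁) (h₂ : 0 < n₂) (h₃ : 0 < n₃)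
    (hN : inS n₁ n₂ n₃ N) : ∃ ℓ, 0 < fmul n₁ n₂ n₃ N ℓ := by
  obtain ⟨a₁, a₂, a₃, ha⟩ := hN
  exact ⟨len (a₁, a₂, a₃), card_pos.2 ⟨_, mem_filter.2 ⟨(mem_Zf h₁ h₂ h₃).2 ha, rfl⟩⟩⟩

section Trade

variable {n₁ n₂ n₃ δ v w : ℕ}

lemma value_eq_len_mul_add (hv : n₂ = n₁ + v * δ) (hw : n₃ = n₁ + w * δ) (a : ℕ × ℕ × ℕ) :
    a.1 * n₁ + a.2.1 * n₂ + a.2.2 * n₃ = len a * n₁ + (a.2.1 * v + a.2.2 * w) * δ := by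
  subst hv hw
  simp only [len]
  ring

lemma eq_of_mem_Zf_of_len_eq (hv : n₂ = n₁ + v * δ) (hw : n₃ = n₁ + w * δ) (hδ : 0 < δ)
    (hco : Nat.Coprime v w) {N : ℕ} {a b : ℕ × ℕ × ℕ} (ha : a ∈ Zf n₁ n₂ n₃ N)
    (hb : b ∈ Zf n₁ n₂ n₃ N) (hlen : len a = len b) (ha₂ : a.2.1 < w) (hb₂ : b.2.1 < w) :
    a = b := by
  obtain ⟨a₁, a₂, a₃⟩ := a
  obtain ⟨b₁, b₂, b₃⟩ := b
  have hval := (mem_filter.1 ha).2.trans (mem_filter.1 hb).2.symm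
  rw [value_eq_len_mul_add hv hw, value_eq_len_mul_add hv hw, hlen] at hval
  have hX : a₂ * v + a₃ * w = b₂ * v + b₃ * w :=
    Nat.eq_of_mul_eq_mul_right hδ (Nat.add_left_cancel hval)
  have h₂ : a₂ = b₂ := by
    refine Nat.ModEq.eq_of_lt_of_lt (Nat.ModEq.cancel_right_of_coprime hco.symm ?_) ha₂ hb₂
    simpa only [Nat.ModEq, Nat.add_mul_mod_self_right] using congrArg (· % w) hX
  subst h₂
  have h₃ : a₃ = b₃ := Nat.eq_of_mul_eq_mul_right (by omega) (Nat.add_left_cancel hX)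
  subst h₃
  simp only [len] at hlen
  simp only [Prod.mk.injEq, and_true]
  omega

/-- Applying the trade `w n₂ = (w - v) n₁ + v n₃` as often as possible. -/
lemma exists_mem_Zf_len_eq_snd_lt (h₀ : 0 < n₁) (hv : n₂ = n₁ + v * δ) (hw : n₃ = n₁ + w * δ)
    (hvw : v ≤ w) (hw₀ : 0 < w) {N : ℕ} {a : ℕ × ℕ × ℕ} (ha : a ∈ Zf n₁ n₂ n₃ N) :
    ∃ b ∈ Zf n₁ n₂ n₃ N, len b = len a ∧ b.2.1 < w := by
  obtain ⟨a₁, a₂, a₃⟩ := a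
  obtain ⟨u, rfl⟩ := Nat.exists_eq_add_of_le' hvw
  have hdiv := Nat.mod_add_div a₂ (u + v)
  have hlen : len (a₁ + a₂ / (u + v) * u, a₂ % (u + v), a₃ + a₂ / (u + v) * v) =
      len (a₁, a₂, a₃) := by
    simp only [len]
    grind
  refine ⟨_, ?_, hlen, Nat.mod_lt _ hw₀⟩
  rw [mem_Zf h₀ (by omega) (by omega), value_eq_len_mul_add hv hw, hlen,
    ← (mem_Zf h₀ (by omega) (by omega)).1 ha, value_eq_len_mul_add hv hw (a₁, a₂, a₃)]
  congr 2
  grind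

lemma card_filter_len_eq_add_le_snd (h₁ : 0 < n₁) (h₂ : 0 < n₂) (h₃ : 0 < n₃) (N m : ℕ) :
    #{a ∈ Zf n₁ n₂ n₃ (N + n₂ * w) | len a = m + w ∧ w ≤ a.2.1} = fmul n₁ n₂ n₃ N m := by
  refine card_nbij' (fun a => (a.1, a.2.1 - w, a.2.2)) (fun a => (a.1, a.2.1 + w, a.2.2))
    ?_ ?_ ?_ ?_
  · rintro ⟨a₁, a₂, a₃⟩ ha
    simp only [mem_coe, mem_filter, mem_Zf h₁ h₂ h₃] at ha ⊢
    dsimp only [len] at ha ⊢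
    obtain ⟨k, rfl⟩ := Nat.exists_eq_add_of_le' ha.2.2
    refine ⟨?_, by omega⟩
    rw [Nat.add_sub_cancel]
    linarith [ha.1]
  · rintro ⟨a₁, a₂, a₃⟩ ha
    simp only [mem_coe, mem_filter, mem_Zf h₁ h₂ h₃] at ha ⊢
    dsimp only [len] at ha ⊢
    refine ⟨?_, by omega, by omega⟩
    linarith [ha.1]
  · rintro ⟨a₁, a₂, a₃⟩ ha
    simp only [mem_coe, mem_filter] at ha
    simp only [Nat.sub_add_cancel ha.2.2]
  · rintro ⟨a₁, a₂, a₃⟩ -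
    simp only [Nat.add_sub_cancel]

lemma fmul_add_mul_add (h₁ : 0 < n₁) (h₂ : 0 < n₂) (h₃ : 0 < n₃) (N m : ℕ) :
    fmul n₁ n₂ n₃ (N + n₂ * w) (m + w) =
      fmul n₁ n₂ n₃ N m + #{a ∈ Zf n₁ n₂ n₃ (N + n₂ * w) | len a = m + w ∧ a.2.1 < w} := by
  rw [fmul, ← card_filter_add_card_filter_not (p := fun a => w ≤ a.2.1), filter_filter,
    filter_filter, card_filter_len_eq_add_le_snd h₁ h₂ h₃]
  simp only [not_le]

lemma card_filter_len_eq_snd_lt_le_one (hv : n₂ = n₁ + v * δ) (hw : n₃ = n₁ + w * δ)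
    (hδ : 0 < δ) (hco : Nat.Coprime v w) (N L : ℕ) :
    #{a ∈ Zf n₁ n₂ n₃ N | len a = L ∧ a.2.1 < w} ≤ 1 := by
  refine card_le_one.2 fun a ha b hb => ?_
  rw [mem_filter] at ha hb
  exact eq_of_mem_Zf_of_len_eq hv hw hδ hco ha.1 hb.1 (ha.2.1.trans hb.2.1.symm) ha.2.2 hb.2.2

lemma fmul_le_one_of_lt (hv : n₂ = n₁ + v * δ) (hw : n₃ = n₁ + w * δ) (hδ : 0 < δ)
    (hco : Nat.Coprime v w) {N L : ℕ} (hL : L < w) : fmul n₁ n₂ n₃ N L ≤ 1 := by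
  refine (card_le_card fun a ha => ?_).trans (card_filter_len_eq_snd_lt_le_one hv hw hδ hco N L)
  rw [mem_filter] at ha ⊢
  refine ⟨ha.1, ha.2, ?_⟩
  have := ha.2
  unfold len at this
  omega

lemma fmul_add_mul_add_le (h₀ : 0 < n₁) (hv : n₂ = n₁ + v * δ) (hw : n₃ = n₁ + w * δ)
    (hδ : 0 < δ) (hco : Nat.Coprime v w) (N m : ℕ) :
    fmul n₁ n₂ n₃ (N + n₂ * w) (m + w) ≤ fmul n₁ n₂ n₃ N m + 1 := by
  rw [fmul_add_mul_add h₀ (by omega) (by omega)]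
  exact Nat.add_le_add_left (card_filter_len_eq_snd_lt_le_one hv hw hδ hco _ _) _

lemma fmul_add_mul_add_of_pos (h₀ : 0 < n₁) (hv : n₂ = n₁ + v * δ) (hw : n₃ = n₁ + w * δ)
    (hδ : 0 < δ) (hco : Nat.Coprime v w) (hvw : v ≤ w) (hw₀ : 0 < w) {N m : ℕ}
    (hm : 0 < fmul n₁ n₂ n₃ N m) :
    fmul n₁ n₂ n₃ (N + n₂ * w) (m + w) = fmul n₁ n₂ n₃ N m + 1 := by
  have h₂ : 0 < n₂ := by omega
  have h₃ : 0 < n₃ := by omega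
  obtain ⟨⟨a₁, a₂, a₃⟩, ha⟩ := card_pos.1 hm
  simp only [mem_filter, mem_Zf h₀ h₂ h₃] at ha
  dsimp only [len] at ha
  have hshift : (a₁, a₂ + w, a₃) ∈ Zf n₁ n₂ n₃ (N + n₂ * w) := by
    rw [mem_Zf h₀ h₂ h₃]
    linarith [ha.1]
  obtain ⟨b, hb, hblen, hb₂⟩ := exists_mem_Zf_len_eq_snd_lt h₀ hv hw hvw hw₀ hshift
  have hlow : 0 < #{a ∈ Zf n₁ n₂ n₃ (N + n₂ * w) | len a = m + w ∧ a.2.1 < w} :=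
    card_pos.2 ⟨b, mem_filter.2 ⟨hb, by rw [hblen]; dsimp only [len]; omega, hb₂⟩⟩
  have := card_filter_len_eq_snd_lt_le_one hv hw hδ hco (N + n₂ * w) (m + w)
  rw [fmul_add_mul_add h₀ h₂ h₃]
  omega

end Trade

theorem mode_set_add_trade_general (n₁ n₂ n₃ : ℕ) (h₀ : 0 < n₁) (h₁ : n₁ < n₂) (h₂ : n₂ < n₃)
    (δ t : ℕ) (hδ : δ = Nat.gcd (n₂ - n₁) (n₃ - n₂)) (ht : t = n₂ * (n₃ - n₁) / δ)
    (n : ℕ) (hn : inS n₁ n₂ n₃ n) :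
    modeSet n₁ n₂ n₃ (n + t) = (fun m => m + t / n₂) '' modeSet n₁ n₂ n₃ n := by
  have hgcd : Nat.gcd (n₂ - n₁) (n₃ - n₁) = δ := by
    rw [hδ, ← Nat.gcd_add_self_right (n₂ - n₁) (n₃ - n₂)]
    congr 1
    omega
  obtain ⟨v, w, hco, hv, hw⟩ := Nat.exists_coprime (n₂ - n₁) (n₃ - n₁)
  rw [hgcd] at hv hw
  have hδ₀ : 0 < δ := hgcd ▸ Nat.gcd_pos_of_pos_left _ (by omega)
  have hvw : v < w := Nat.lt_of_mul_lt_mul_right (a := δ) (by omega)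
  have ht' : t = n₂ * w := by
    rw [ht, hw, ← mul_assoc, Nat.mul_div_cancel _ hδ₀]
  subst ht'
  rw [Nat.mul_div_cancel_left _ (by omega)]
  have hv' : n₂ = n₁ + v * δ := by omega
  have hw' : n₃ = n₁ + w * δ := by omega
  exact modes_eq_image_add (bddAbove_range_fmul n₁ n₂ n₃ n)
    (exists_fmul_pos h₀ (by omega) (by omega) hn)
    (fun _ => fmul_le_one_of_lt hv' hw' hδ₀ hco)
    (fmul_add_mul_add_le h₀ hv' hw' hδ₀ hco n)
    (fun _ => fmul_add_mul_add_of_pos h₀ hv' hw' hδ₀ hco hvw.le (by omega))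

/-- For n ∈ S, the set of mode lengths satisfies γ(n + t) = {m + t/n₂ : m ∈ γ(n)}. -/
theorem mode_set_add_trade (n₁ n₂ n₃ : ℕ) (h₀ : 0 < n₁) (h₁ : n₁ < n₂) (h₂ : n₂ < n₃)
    (hg : Nat.gcd n₁ (Nat.gcd n₂ n₃) = 1)
    (δ t : ℕ) (hδ : δ = Nat.gcd (n₂ - n₁) (n₃ - n₂)) (ht : t = n₂ * (n₃ - n₁) / δ)
    (n : ℕ) (hn : inS n₁ n₂ n₃ n) :
    modeSet n₁ n₂ n₃ (n + t) = (fun m => m + t / n₂) '' modeSet n₁ n₂ n₃ n :=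
  mode_set_add_trade_general n₁ n₂ n₃ h₀ h₁ h₂ δ t hδ ht n hn
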